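/- Let G be a linear operator defined on trigonometric polynomials by G e^{i(k,x)} = ∑_{m=1}^L a_m^k ψ_m(x), where ψ_1,...,ψ_L satisfy ‖ψ_m‖_{L^2} ≤ 1. Then for any trigonometric polynomial t on the d-torus, min_x Re (G t_y)(x)|_{y=x} ≤ (L ∑_{m=1}^L ∑_k |a_m^k t̂(k)|^2)^{1/2}, where t_y(x) = t(x−y) and t̂(k) are the Fourier coefficients of t; equivalently, min_x Re ∑_k t̂(k) e^{−i(k,x)} (G e^{i(k,·)})(x) ≤ (L ∑_{m=1}^L ∑_k |a_m^k t̂(k)|^2)^{1/2}. -/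

import Mathlib

open Real MeasureTheory ENNReal Finset

/-- Normalized Lebesgue measure on the cube `[0,2π]^d`. -/
noncomputable def torusMeasure (d : ℕ) : Measure (Fin d → ℝ) :=
  (ENNReal.ofReal ((2 * Real.pi) ^ d))⁻¹ •
    volume.restrict (Set.univ.pi fun _ : Fin d => Set.Icc 0 (2 * Real.pi))

noncomputable def mu1 : Measure ℝ := volume.restrict (Set.Icc 0 (2 * Real.pi))

instance : SigmaFinite mu1 := by unfold mu1; infer_instance

lemma pi_restrict (d : ℕ) :
    volume.restrict (Set.univ.pi fun _ : Fin d => Set.Icc 0 (2 * Real.pi))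
      = Measure.pi (fun _ : Fin d => mu1) := by
  symm
  apply Measure.pi_eq
  intro s hs
  rw [Measure.restrict_apply (MeasurableSet.univ_pi fun i => (hs i))]
  have h1 : (Set.univ.pi s) ∩ (Set.univ.pi fun _ : Fin d => Set.Icc 0 (2 * Real.pi))
      = Set.univ.pi fun i => s i ∩ Set.Icc 0 (2 * Real.pi) := by
    rw [← Set.pi_inter_distrib]
  rw [h1, volume_pi, Measure.pi_pi]
  refine Finset.prod_congr rfl fun i _ => ?_
  rw [mu1, Measure.restrict_apply (hs i)]

lemma integral_pi_mu1 (d : ℕ) (f : Fin d → ℝ → ℂ) :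
    ∫ x : Fin d → ℝ, ∏ j, f j (x j) ∂(Measure.pi fun _ : Fin d => mu1)
      = ∏ j, ∫ y, f j y ∂mu1 := by
  letI : MeasureSpace ℝ := ⟨mu1⟩
  haveI : SigmaFinite (volume : Measure ℝ) := inferInstanceAs (SigmaFinite mu1)
  exact MeasureTheory.integral_fintype_prod_eq_prod (ι := Fin d) f

lemma integral_mu1_exp (n : ℤ) :
    ∫ y, Complex.exp (Complex.I * n * y) ∂mu1 = if n = 0 then (2 * Real.pi : ℂ) else 0 := by
  rcases eq_or_ne n 0 with rfl | hn
  · simp only [Int.cast_zero, mul_zero, zero_mul, Complex.exp_zero, if_pos rfl]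
    rw [mu1, integral_const]
    simp [Real.volume_Icc, Real.two_pi_pos.le, ENNReal.toReal_ofReal, Complex.ofReal_mul]
  · have hc : (Complex.I * n : ℂ) ≠ 0 :=
      mul_ne_zero Complex.I_ne_zero (Int.cast_ne_zero.mpr hn)
    rw [if_neg hn, mu1, integral_Icc_eq_integral_Ioc,
      ← intervalIntegral.integral_of_le Real.two_pi_pos.le,
      integral_exp_mul_complex hc]
    have h2 : (Complex.I * n) * ((2 * Real.pi : ℝ) : ℂ) = (n : ℂ) * (2 * (Real.pi : ℂ) * Complex.I) := by
      push_cast; ring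
    rw [h2, Complex.exp_int_mul_two_pi_mul_I]
    norm_num

lemma torus_integral_exp (d : ℕ) (n : Fin d → ℤ) :
    ∫ x : Fin d → ℝ, Complex.exp (Complex.I * ∑ j, (n j : ℂ) * (x j : ℂ)) ∂(torusMeasure d)
      = if n = 0 then 1 else 0 := by
  have h1 : ∀ x : Fin d → ℝ, Complex.exp (Complex.I * ∑ j, (n j : ℂ) * (x j : ℂ))
      = ∏ j, Complex.exp (Complex.I * (n j : ℂ) * (x j : ℂ)) := by
    intro x
    rw [Finset.mul_sum, Complex.exp_sum]
    exact Finset.prod_congr rfl fun j _ => by rw [mul_assoc]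
  simp_rw [torusMeasure, pi_restrict, integral_smul_measure, h1]
  rw [integral_pi_mu1 d (fun j y => Complex.exp (Complex.I * (n j : ℂ) * (y : ℂ)))]
  simp_rw [integral_mu1_exp]
  rcases eq_or_ne n 0 with rfl | hn
  · simp only [Pi.zero_apply, if_pos rfl, Finset.prod_const, Finset.card_univ,
      Fintype.card_fin, ENNReal.toReal_inv]
    rw [ENNReal.toReal_ofReal (by positivity), Complex.real_smul]
    push_cast
    rw [inv_mul_cancel₀ (pow_ne_zero _ (by simp [Real.pi_ne_zero] : (2 * (Real.pi : ℂ)) ≠ 0))]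
  · rw [if_neg hn]
    obtain ⟨j, hj⟩ : ∃ j, n j ≠ 0 := by
      by_contra h
      push_neg at h
      exact hn (funext h)
    have hz : (if n j = 0 then (2 * (Real.pi : ℂ)) else 0) = 0 := if_neg hj
    rw [Finset.prod_eq_zero (Finset.mem_univ j) hz, smul_zero]

lemma torus_orthogonality (d : ℕ) (k l : Fin d → ℤ) :
    ∫ x : Fin d → ℝ, Complex.exp (Complex.I * ∑ j, (k j : ℂ) * (x j : ℂ)) *
        Complex.exp (-(Complex.I * ∑ j, (l j : ℂ) * (x j : ℂ))) ∂(torusMeasure d)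
      = if k = l then 1 else 0 := by
  have h1 : ∀ x : Fin d → ℝ,
      Complex.exp (Complex.I * ∑ j, (k j : ℂ) * (x j : ℂ)) *
        Complex.exp (-(Complex.I * ∑ j, (l j : ℂ) * (x j : ℂ)))
      = Complex.exp (Complex.I * ∑ j, (((k - l) j : ℤ) : ℂ) * (x j : ℂ)) := by
    intro x
    rw [← Complex.exp_add]
    congr 1
    have h2 : ∑ j, (((k - l) j : ℤ) : ℂ) * (x j : ℂ)
        = (∑ j, (k j : ℂ) * (x j : ℂ)) - ∑ j, (l j : ℂ) * (x j : ℂ) := by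
      rw [← Finset.sum_sub_distrib]
      exact Finset.sum_congr rfl fun j _ => by rw [Pi.sub_apply]; push_cast; ring
    rw [h2]; ring
  simp_rw [h1, torus_integral_exp, sub_eq_zero]

instance torus_prob (d : ℕ) : IsProbabilityMeasure (torusMeasure d) := by
  constructor
  rw [torusMeasure, pi_restrict, Measure.smul_apply, Measure.pi_univ]
  have h1 : mu1 Set.univ = ENNReal.ofReal (2 * Real.pi) := by
    rw [mu1, Measure.restrict_apply MeasurableSet.univ, Set.univ_inter, Real.volume_Icc]
    norm_num
  rw [h1, Finset.prod_const, Finset.card_univ, Fintype.card_fin, smul_eq_mul,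
    ENNReal.ofReal_pow Real.two_pi_pos.le]
  exact ENNReal.inv_mul_cancel (pow_ne_zero _ (by simp [Real.pi_pos]))
    (pow_ne_top ofReal_ne_top)

/-- Temlyakov's Lemma A: if `G e^{i(k,x)} = ∑_{m=1}^L a_m^k ψ_m(x)` with `‖ψ_m‖₂ ≤ 1`,
then for any trigonometric polynomial `t` (with Fourier coefficients `tc` supported on the
finite set `T`),
`min_x Re ∑_k t̂(k) e^{−i(k,x)} (G e^{i(k,·)})(x) ≤ (L ∑_m ∑_k |a_m^k t̂(k)|²)^(1/2)`. -/
theorem stmt_8 (d L : ℕ) (hd : 1 ≤ d) (a : Fin L → (Fin d → ℤ) → ℂ)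
    (ψ : Fin L → (Fin d → ℝ) → ℂ) (hψmeas : ∀ m, Measurable (ψ m))
    (hψ : ∀ m, eLpNorm (ψ m) 2 (torusMeasure d) ≤ 1)
    (T : Finset (Fin d → ℤ)) (tc : (Fin d → ℤ) → ℂ) :
    ∃ x : Fin d → ℝ,
      (∑ k ∈ T, tc k * Complex.exp (-(Complex.I * ∑ j, (k j : ℂ) * (x j : ℂ))) *
          ∑ m, a m k * ψ m x).re
        ≤ Real.sqrt ((L : ℝ) * ∑ m, ∑ k ∈ T, ‖a m k * tc k‖ ^ 2) := by
  classical
  set μ := torusMeasure d with hμ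
  haveI : IsProbabilityMeasure μ := torus_prob d
  set E : (Fin d → ℤ) → (Fin d → ℝ) → ℂ :=
    fun k x => Complex.exp (-(Complex.I * ∑ j, (k j : ℂ) * (x j : ℂ))) with hE
  set c : Fin L → (Fin d → ℤ) → ℂ := fun m k => a m k * tc k with hc
  have hEcont : ∀ k, Continuous (E k) := by
    intro k
    exact Complex.continuous_exp.comp ((continuous_const.mul (continuous_finset_sum _
      (fun j _ => continuous_const.mul
        (Complex.continuous_ofReal.comp (continuous_apply j))))).neg)
  have hr : ∀ (k : Fin d → ℤ) (x : Fin d → ℝ),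
      (∑ j, (k j : ℂ) * (x j : ℂ)) = (((∑ j, (k j : ℝ) * x j : ℝ)) : ℂ) := by
    intro k x; push_cast; rfl
  have hEnorm : ∀ k x, ‖E k x‖ = 1 := by
    intro k x
    simp only [hE, Complex.norm_exp, hr k x]
    simp [Complex.mul_re]
  have hEconj : ∀ k x, (starRingEnd ℂ) (E k x)
      = Complex.exp (Complex.I * ∑ j, (k j : ℂ) * (x j : ℂ)) := by
    intro k x
    simp only [hE, ← Complex.exp_conj, hr k x, map_neg, map_mul, Complex.conj_I,
      Complex.conj_ofReal]
    ring_nf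
  have intBdd : ∀ (f : (Fin d → ℝ) → ℂ) (C : ℝ), Continuous f → (∀ x, ‖f x‖ ≤ C) →
      Integrable f μ := fun f C hf hb =>
    (memLp_top_of_bound hf.aestronglyMeasurable C (ae_of_all _ hb)).integrable le_top
  set h : Fin L → (Fin d → ℝ) → ℂ := fun m x => ∑ k ∈ T, c m k * E k x with hh
  have hhcont : ∀ m, Continuous (h m) :=
    fun m => continuous_finset_sum _ fun k _ => continuous_const.mul (hEcont k)
  have hhbdd : ∀ m x, ‖h m x‖ ≤ ∑ k ∈ T, ‖c m k‖ := by
    intro m x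
    refine (norm_sum_le _ _).trans (Finset.sum_le_sum fun k _ => ?_)
    rw [norm_mul, hEnorm, mul_one]
  have hψ2 : ∀ m, MemLp (ψ m) 2 μ :=
    fun m => ⟨(hψmeas m).aestronglyMeasurable, lt_of_le_of_lt (hψ m) ENNReal.one_lt_top⟩
  have hψint : ∀ m, Integrable (ψ m) μ := fun m => (hψ2 m).integrable (by norm_num)
  have hint : ∀ m, Integrable (fun x => h m x * ψ m x) μ := fun m =>
    (hψint m).bdd_mul (hhcont m).aestronglyMeasurable (ae_of_all _ (hhbdd m))
  have hEE : ∀ k l, ∫ x, E k x * (starRingEnd ℂ) (E l x) ∂μ = if l = k then 1 else 0 := by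
    intro k l
    have heq : ∀ x : Fin d → ℝ, E k x * (starRingEnd ℂ) (E l x)
        = Complex.exp (Complex.I * ∑ j, (l j : ℂ) * (x j : ℂ)) *
          Complex.exp (-(Complex.I * ∑ j, (k j : ℂ) * (x j : ℂ))) := by
      intro x; rw [hEconj l x, hE, mul_comm]
    simp_rw [heq]
    exact torus_orthogonality d l k
  -- L² norm of h m
  have hnormsq : ∀ m, ∫ x, ‖h m x‖ ^ (2 : ℝ) ∂μ = ∑ k ∈ T, ‖c m k‖ ^ 2 := by
    intro m
    have hsq : ∀ x : Fin d → ℝ, ‖h m x‖ ^ (2 : ℝ) = (h m x * (starRingEnd ℂ) (h m x)).re := by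
      intro x
      rw [show ((2 : ℝ)) = ((2 : ℕ) : ℝ) from by norm_num, Real.rpow_natCast,
        Complex.mul_conj]
      simp [Complex.normSq_eq_norm_sq, ← Complex.ofReal_pow]
    have hexp : ∀ x : Fin d → ℝ, h m x * (starRingEnd ℂ) (h m x)
        = ∑ k ∈ T, ∑ l ∈ T, (c m k * (starRingEnd ℂ) (c m l)) *
            (E k x * (starRingEnd ℂ) (E l x)) := by
      intro x
      rw [hh]
      simp only
      rw [map_sum, Finset.sum_mul_sum]
      refine Finset.sum_congr rfl fun k _ => Finset.sum_congr rfl fun l _ => ?_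
      rw [map_mul]; ring
    have hterm_int : ∀ k l, Integrable
        (fun x => (c m k * (starRingEnd ℂ) (c m l)) * (E k x * (starRingEnd ℂ) (E l x))) μ := by
      intro k l
      refine intBdd _ (‖c m k‖ * ‖c m l‖)
        (continuous_const.mul ((hEcont k).mul (Complex.continuous_conj.comp (hEcont l)))) ?_
      intro x
      simp only [norm_mul, RCLike.norm_conj, hEnorm, mul_one, le_refl]
    have hint2 : Integrable (fun x => h m x * (starRingEnd ℂ) (h m x)) μ := by
      refine intBdd _ ((∑ k ∈ T, ‖c m k‖) * (∑ k ∈ T, ‖c m k‖)) ((hhcont m).mul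
        (Complex.continuous_conj.comp (hhcont m))) ?_
      intro x
      rw [norm_mul, RCLike.norm_conj]
      exact mul_le_mul (hhbdd m x) (hhbdd m x) (norm_nonneg _)
        (Finset.sum_nonneg fun k _ => norm_nonneg _)
    calc ∫ x, ‖h m x‖ ^ (2 : ℝ) ∂μ
        = ∫ x, (h m x * (starRingEnd ℂ) (h m x)).re ∂μ := by simp_rw [hsq]
      _ = (∫ x, h m x * (starRingEnd ℂ) (h m x) ∂μ).re := integral_re hint2
      _ = (∑ k ∈ T, ∑ l ∈ T, (c m k * (starRingEnd ℂ) (c m l)) *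
            ∫ x, E k x * (starRingEnd ℂ) (E l x) ∂μ).re := by
          simp_rw [hexp]
          rw [integral_finset_sum T (fun k _ => integrable_finset_sum T fun l _ => hterm_int k l)]
          congr 1
          refine Finset.sum_congr rfl fun k _ => ?_
          rw [integral_finset_sum T (fun l _ => hterm_int k l)]
          exact Finset.sum_congr rfl fun l _ => integral_const_mul _ _
      _ = ∑ k ∈ T, ‖c m k‖ ^ 2 := by
          have hinner : ∀ k ∈ T, ∑ l ∈ T, (c m k * (starRingEnd ℂ) (c m l)) *
              ∫ x, E k x * (starRingEnd ℂ) (E l x) ∂μ = c m k * (starRingEnd ℂ) (c m k) := by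
            intro k hk
            simp_rw [hEE]
            rw [Finset.sum_eq_single k]
            · rw [if_pos rfl, mul_one]
            · intro l hl hlk; rw [if_neg hlk, mul_zero]
            · intro hk'; exact absurd hk hk'
          rw [Finset.sum_congr rfl hinner, Complex.re_sum]
          refine Finset.sum_congr rfl fun k _ => ?_
          rw [Complex.mul_conj]
          simp [Complex.normSq_eq_norm_sq, ← Complex.ofReal_pow]
  have hp2 : ENNReal.ofReal (2 : ℝ) = 2 := by norm_num
  have hkey : ∀ m, (∫ x, h m x * ψ m x ∂μ).re ≤ Real.sqrt (∑ k ∈ T, ‖c m k‖ ^ 2) := by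
    intro m
    have hh2 : MemLp (fun x => ‖h m x‖) (ENNReal.ofReal 2) μ := by
      rw [hp2]
      exact ((memLp_top_of_bound (hhcont m).aestronglyMeasurable _
        (ae_of_all _ (hhbdd m))).mono_exponent le_top).norm
    have hψn2 : MemLp (fun x => ‖ψ m x‖) (ENNReal.ofReal 2) μ := by
      rw [hp2]; exact (hψ2 m).norm
    have h4 : ∫ x, ‖h m x‖ * ‖ψ m x‖ ∂μ ≤
        (∫ x, ‖h m x‖ ^ (2 : ℝ) ∂μ) ^ ((1 : ℝ) / 2) *
          (∫ x, ‖ψ m x‖ ^ (2 : ℝ) ∂μ) ^ ((1 : ℝ) / 2) :=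
      integral_mul_le_Lp_mul_Lq_of_nonneg ⟨by norm_num, by norm_num, by norm_num⟩
        (ae_of_all _ fun x => norm_nonneg _) (ae_of_all _ fun x => norm_nonneg _) hh2 hψn2
    have h5 : (∫ x, ‖ψ m x‖ ^ (2 : ℝ) ∂μ) ^ ((1 : ℝ) / 2) ≤ 1 := by
      have he := (hψ2 m).eLpNorm_eq_integral_rpow_norm (by norm_num) (by norm_num)
      have hψ1 := hψ m
      rw [he] at hψ1
      have h2t : (2 : ℝ≥0∞).toReal = 2 := by norm_num
      rw [h2t] at hψ1
      have := ENNReal.ofReal_le_one.mp hψ1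
      simpa [one_div] using this
    have h6 : (0 : ℝ) ≤ (∫ x, ‖h m x‖ ^ (2 : ℝ) ∂μ) ^ ((1 : ℝ) / 2) :=
      Real.rpow_nonneg (integral_nonneg fun x => Real.rpow_nonneg (norm_nonneg _) _) _
    calc (∫ x, h m x * ψ m x ∂μ).re ≤ ‖∫ x, h m x * ψ m x ∂μ‖ := by
          exact Complex.re_le_norm _
      _ ≤ ∫ x, ‖h m x * ψ m x‖ ∂μ := norm_integral_le_integral_norm _
      _ = ∫ x, ‖h m x‖ * ‖ψ m x‖ ∂μ := by simp_rw [norm_mul]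
      _ ≤ (∫ x, ‖h m x‖ ^ (2 : ℝ) ∂μ) ^ ((1 : ℝ) / 2) *
            (∫ x, ‖ψ m x‖ ^ (2 : ℝ) ∂μ) ^ ((1 : ℝ) / 2) := h4
      _ ≤ (∫ x, ‖h m x‖ ^ (2 : ℝ) ∂μ) ^ ((1 : ℝ) / 2) * 1 :=
          mul_le_mul_of_nonneg_left h5 h6
      _ = Real.sqrt (∑ k ∈ T, ‖c m k‖ ^ 2) := by
          rw [mul_one, hnormsq m, Real.sqrt_eq_rpow]
  -- assemble
  have hS : ∀ x : Fin d → ℝ, (∑ k ∈ T, tc k * E k x * ∑ m, a m k * ψ m x)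
      = ∑ m, h m x * ψ m x := by
    intro x
    simp only [hh, hc, Finset.sum_mul, Finset.mul_sum]
    rw [Finset.sum_comm]
    exact Finset.sum_congr rfl fun m _ => Finset.sum_congr rfl fun k _ => by ring
  have hFint : Integrable (fun x => ∑ m, h m x * ψ m x) μ :=
    integrable_finset_sum _ fun m _ => hint m
  have hFre : Integrable (fun x => (∑ m, h m x * ψ m x).re) μ := hFint.re
  obtain ⟨x, hx⟩ := MeasureTheory.exists_le_integral hFre
  refine ⟨x, ?_⟩
  have hsum_nonneg : (0 : ℝ) ≤ ∑ m, ∑ k ∈ T, ‖c m k‖ ^ 2 :=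
    Finset.sum_nonneg fun m _ => Finset.sum_nonneg fun k _ => sq_nonneg _
  calc (∑ k ∈ T, tc k * E k x * ∑ m, a m k * ψ m x).re
      = (∑ m, h m x * ψ m x).re := by rw [hS x]
    _ ≤ ∫ y, (∑ m, h m y * ψ m y).re ∂μ := hx
    _ = (∫ y, ∑ m, h m y * ψ m y ∂μ).re := integral_re hFint
    _ = (∑ m, ∫ y, h m y * ψ m y ∂μ).re := by
        rw [integral_finset_sum _ fun m _ => hint m]
    _ = ∑ m, (∫ y, h m y * ψ m y ∂μ).re := Complex.re_sum _ _
    _ ≤ ∑ m, Real.sqrt (∑ k ∈ T, ‖c m k‖ ^ 2) := Finset.sum_le_sum fun m _ => hkey m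
    _ ≤ Real.sqrt ((L : ℝ) * ∑ m, ∑ k ∈ T, ‖c m k‖ ^ 2) := by
        have hcs := sq_sum_le_card_mul_sum_sq
          (s := (Finset.univ : Finset (Fin L))) (f := fun m => Real.sqrt (∑ k ∈ T, ‖c m k‖ ^ 2))
        have hsq' : ∀ m : Fin L, Real.sqrt (∑ k ∈ T, ‖c m k‖ ^ 2) ^ 2 = ∑ k ∈ T, ‖c m k‖ ^ 2 :=
          fun m => Real.sq_sqrt (Finset.sum_nonneg fun k _ => sq_nonneg _)
        simp only [hsq', Finset.card_univ, Fintype.card_fin] at hcs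
        calc ∑ m, Real.sqrt (∑ k ∈ T, ‖c m k‖ ^ 2)
            = Real.sqrt ((∑ m, Real.sqrt (∑ k ∈ T, ‖c m k‖ ^ 2)) ^ 2) :=
              (Real.sqrt_sq (Finset.sum_nonneg fun m _ => Real.sqrt_nonneg _)).symm
          _ ≤ Real.sqrt ((L : ℝ) * ∑ m, ∑ k ∈ T, ‖c m k‖ ^ 2) := Real.sqrt_le_sqrt hcs
    _ = Real.sqrt ((L : ℝ) * ∑ m, ∑ k ∈ T, ‖a m k * tc k‖ ^ 2) := by
        simp only [hc]
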